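/- arXiv:2001.09146 — 4 statements merged into one kernel-verified Lean document; each statement's English description precedes it below -/
import Mathlib

section
/- With unit server rates and recovery sets of size at most 2, the service capacity (the maximum of Σ_i λ_i over servable demand vectors λ) equals the fractional matching number of the graph representation of the code. -/
/-!
A split `x` of a servable demand with unit rates is itself a fractional matching: each
`x i j` is at most the load of any server in the (nonempty) recovery set `R i j`, hence at
most `1`. Conversely, the row sums of a fractional matching form a servable demand with the
same total. So the two suprema are taken over the same set of reals.
-/

open Finset

/-- A demand vector `lam` is servable by the coded storage system with recovery
sets `R` and server rates `μ` if the requests can be split over recovery sets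
without exceeding any server's rate. -/
def Servable (k n : ℕ) (t : Fin k → ℕ) (R : (i : Fin k) → Fin (t i) → Finset (Fin n))
    (μ : Fin n → ℝ) (lam : Fin k → ℝ) : Prop :=
  ∃ x : (i : Fin k) → Fin (t i) → ℝ,
    (∀ i j, 0 ≤ x i j) ∧ (∀ i, ∑ j, x i j = lam i) ∧
    ∀ l, (∑ i, ∑ j, if l ∈ R i j then x i j else 0) ≤ μ l

/-- A fractional matching in the graph representation of the code: a value in
`[0,1]` on each edge (recovery set), with total value at most `1` at each
non-dummy vertex (server). -/
def IsFracMatching (k n : ℕ) (t : Fin k → ℕ)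
    (R : (i : Fin k) → Fin (t i) → Finset (Fin n))
    (x : (i : Fin k) → Fin (t i) → ℝ) : Prop :=
  (∀ i j, 0 ≤ x i j ∧ x i j ≤ 1) ∧
  ∀ l : Fin n, (∑ i, ∑ j, if l ∈ R i j then x i j else 0) ≤ 1

theorem le_load_of_mem {k n : ℕ} {t : Fin k → ℕ} {R : (i : Fin k) → Fin (t i) → Finset (Fin n)}
    {x : (i : Fin k) → Fin (t i) → ℝ} (hx : ∀ i j, 0 ≤ x i j) {i : Fin k} {j : Fin (t i)}
    {l : Fin n} (hl : l ∈ R i j) :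
    x i j ≤ ∑ i', ∑ j', if l ∈ R i' j' then x i' j' else 0 := by
  have hterm : ∀ i' j', 0 ≤ if l ∈ R i' j' then x i' j' else 0 := fun i' j' =>
    ite_nonneg (hx i' j') le_rfl
  calc x i j = if l ∈ R i j then x i j else 0 := (if_pos hl).symm
    _ ≤ ∑ j', if l ∈ R i j' then x i j' else 0 :=
      single_le_sum (fun j' _ => hterm i j') (mem_univ j)
    _ ≤ ∑ i', ∑ j', if l ∈ R i' j' then x i' j' else 0 :=
      single_le_sum (f := fun i' => ∑ j', if l ∈ R i' j' then x i' j' else 0)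
        (fun i' _ => sum_nonneg fun j' _ => hterm i' j') (mem_univ i)

theorem isFracMatching_of_load_le_one {k n : ℕ} {t : Fin k → ℕ}
    {R : (i : Fin k) → Fin (t i) → Finset (Fin n)} (hR : ∀ i j, (R i j).Nonempty)
    {x : (i : Fin k) → Fin (t i) → ℝ} (hx : ∀ i j, 0 ≤ x i j)
    (hload : ∀ l, (∑ i, ∑ j, if l ∈ R i j then x i j else 0) ≤ 1) :
    IsFracMatching k n t R x := by
  refine ⟨fun i j => ⟨hx i j, ?_⟩, hload⟩
  obtain ⟨l, hl⟩ := hR i j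
  exact (le_load_of_mem hx hl).trans (hload l)

theorem servable_totals_eq_fracMatching_totals {k n : ℕ} {t : Fin k → ℕ}
    {R : (i : Fin k) → Fin (t i) → Finset (Fin n)} (hR : ∀ i j, (R i j).Nonempty) :
    {s : ℝ | ∃ lam : Fin k → ℝ, Servable k n t R (fun _ => 1) lam ∧ s = ∑ i, lam i} =
      {s : ℝ | ∃ x : (i : Fin k) → Fin (t i) → ℝ,
        IsFracMatching k n t R x ∧ s = ∑ i, ∑ j, x i j} := by
  ext s
  constructor
  · rintro ⟨lam, ⟨x, hx, hsum, hload⟩, rfl⟩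
    exact ⟨x, isFracMatching_of_load_le_one hR hx hload, sum_congr rfl fun i _ => (hsum i).symm⟩
  · rintro ⟨x, ⟨hbd, hload⟩, rfl⟩
    exact ⟨fun i => ∑ j, x i j, ⟨x, fun i j => (hbd i j).1, fun _ => rfl, hload⟩, rfl⟩

theorem service_capacity_eq_frac_matching_number (k n : ℕ) (t : Fin k → ℕ)
    (R : (i : Fin k) → Fin (t i) → Finset (Fin n))
    (hcard : ∀ i j, (R i j).Nonempty ∧ (R i j).card ≤ 2) :
    sSup {s : ℝ | ∃ lam : Fin k → ℝ, Servable k n t R (fun _ => 1) lam ∧ s = ∑ i, lam i} =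
      sSup {s : ℝ | ∃ x : (i : Fin k) → Fin (t i) → ℝ,
        IsFracMatching k n t R x ∧ s = ∑ i, ∑ j, x i j} := by
  rw [servable_totals_eq_fracMatching_totals fun i j => (hcard i j).1]
end

section
/- With unit server rates and recovery sets of size at most 2, the service capacity λ* of the coded storage system satisfies m(G) ≤ λ* ≤ v(G), where m(G) is the matching number and v(G) is the vertex cover number (covers consisting of non-dummy vertices) of the graph representation of the code. -/
/-!
A fractional allocation `x` of a demand vector only puts nonnegative mass on recovery sets, and
each recovery set meets the vertex cover `C`; so the total demand is at most the total load on
the servers of `C`, which is at most `#C` under unit rates. Conversely, routing one unit of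
demand through each recovery set of a matching loads every server at most once, because the
recovery sets of a matching are pairwise disjoint.
-/

open Finset

section Servable

variable {k n : ℕ} {t : Fin k → ℕ} {R : (i : Fin k) → Fin (t i) → Finset (Fin n)}

theorem Servable.sum_le_sum_of_cover {μ : Fin n → ℝ} {lam : Fin k → ℝ}
    (hlam : Servable k n t R μ lam) {C : Finset (Fin n)} (hC : ∀ i j, ∃ l ∈ C, l ∈ R i j) :
    ∑ i, lam i ≤ ∑ l ∈ C, μ l := by
  obtain ⟨x, hx0, hxsum, hload⟩ := hlam
  have hcovered : ∀ i j, x i j ≤ ∑ l ∈ C, if l ∈ R i j then x i j else 0 := by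
    intro i j
    obtain ⟨l, hlC, hlR⟩ := hC i j
    calc x i j = if l ∈ R i j then x i j else 0 := (if_pos hlR).symm
      _ ≤ ∑ l ∈ C, if l ∈ R i j then x i j else 0 :=
        single_le_sum (f := fun l => if l ∈ R i j then x i j else 0)
          (fun _ _ => by split_ifs <;> simp [hx0]) hlC
  calc ∑ i, lam i = ∑ i, ∑ j, x i j := by simp only [hxsum]
    _ ≤ ∑ i, ∑ j, ∑ l ∈ C, if l ∈ R i j then x i j else 0 :=
      sum_le_sum fun i _ => sum_le_sum fun j _ => hcovered i j
    _ = ∑ l ∈ C, ∑ i, ∑ j, if l ∈ R i j then x i j else 0 := by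
      rw [sum_comm]
      exact sum_congr rfl fun _ _ => sum_comm
    _ ≤ ∑ l ∈ C, μ l := sum_le_sum fun l _ => hload l

def unitDemand (M : Finset ((i : Fin k) × Fin (t i))) (i : Fin k) : ℝ :=
  ∑ j, if (⟨i, j⟩ : (i : Fin k) × Fin (t i)) ∈ M then 1 else 0

theorem sum_unitDemand (M : Finset ((i : Fin k) × Fin (t i))) :
    ∑ i, unitDemand M i = #M := by
  simp only [unitDemand]
  rw [← Fintype.sum_sigma (fun e => if e ∈ M then (1 : ℝ) else 0), sum_boole,
    filter_mem_eq_inter, univ_inter]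

theorem card_filter_mem_le_one_of_pairwiseDisjoint {ι α : Type*} [DecidableEq α]
    {M : Finset ι} {S : ι → Finset α} (hM : (M : Set ι).PairwiseDisjoint S) (a : α) :
    #{e ∈ M | a ∈ S e} ≤ 1 := by
  rw [card_le_one]
  intro e he e' he'
  rw [mem_filter] at he he'
  by_contra hne
  exact disjoint_left.mp (hM he.1 he'.1 hne) he.2 he'.2

theorem servable_unitDemand {μ : Fin n → ℝ} (hμ : ∀ l, 1 ≤ μ l)
    {M : Finset ((i : Fin k) × Fin (t i))}
    (hM : (M : Set ((i : Fin k) × Fin (t i))).PairwiseDisjoint fun e => R e.1 e.2) :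
    Servable k n t R μ (unitDemand M) := by
  refine ⟨fun i j => if ⟨i, j⟩ ∈ M then 1 else 0, fun _ _ => by positivity, fun _ => rfl,
    fun l => ?_⟩
  have hload :
      (∑ i, ∑ j, if l ∈ R i j then (if ⟨i, j⟩ ∈ M then (1 : ℝ) else 0) else 0) =
        #{e ∈ M | l ∈ R e.1 e.2} := by
    rw [← Fintype.sum_sigma
        (fun e => if l ∈ R e.1 e.2 then (if e ∈ M then (1 : ℝ) else 0) else 0),
      ← filter_mem_eq_inter.trans (univ_inter M), filter_filter, ← sum_boole]
    exact sum_congr rfl fun e _ => by by_cases e ∈ M <;> by_cases l ∈ R e.1 e.2 <;> simp [*]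
  rw [hload]
  exact le_trans (by exact_mod_cast card_filter_mem_le_one_of_pairwiseDisjoint hM l) (hμ l)

end Servable

theorem matching_le_capacity_le_cover_general (k n : ℕ) (t : Fin k → ℕ)
    (R : (i : Fin k) → Fin (t i) → Finset (Fin n))
    (M : Finset ((i : Fin k) × Fin (t i)))
    (hM : ∀ e ∈ M, ∀ e' ∈ M, e ≠ e' → Disjoint (R e.1 e.2) (R e'.1 e'.2))
    (C : Finset (Fin n))
    (hC : ∀ i j, ∃ l ∈ C, l ∈ R i j) :
    (M.card : ℝ) ≤
        sSup {s : ℝ | ∃ lam : Fin k → ℝ, Servable k n t R (fun _ => 1) lam ∧ s = ∑ i, lam i} ∧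
      sSup {s : ℝ | ∃ lam : Fin k → ℝ, Servable k n t R (fun _ => 1) lam ∧ s = ∑ i, lam i} ≤
        (C.card : ℝ) := by
  set S := {s : ℝ | ∃ lam : Fin k → ℝ, Servable k n t R (fun _ => 1) lam ∧ s = ∑ i, lam i}
  have hle_cover : ∀ s ∈ S, s ≤ #C := by
    rintro s ⟨lam, hlam, rfl⟩
    simpa using hlam.sum_le_sum_of_cover hC
  have hmatching_mem : (#M : ℝ) ∈ S :=
    ⟨unitDemand M, servable_unitDemand (fun _ => le_rfl) hM, (sum_unitDemand M).symm⟩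
  exact ⟨le_csSup ⟨_, hle_cover⟩ hmatching_mem, csSup_le ⟨_, hmatching_mem⟩ hle_cover⟩

theorem matching_le_capacity_le_cover (k n : ℕ) (t : Fin k → ℕ)
    (R : (i : Fin k) → Fin (t i) → Finset (Fin n))
    (hcard : ∀ i j, (R i j).Nonempty ∧ (R i j).card ≤ 2)
    (M : Finset ((i : Fin k) × Fin (t i)))
    (hM : ∀ e ∈ M, ∀ e' ∈ M, e ≠ e' → Disjoint (R e.1 e.2) (R e'.1 e'.2))
    (C : Finset (Fin n))
    (hC : ∀ i j, ∃ l ∈ C, l ∈ R i j) :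
    (M.card : ℝ) ≤
        sSup {s : ℝ | ∃ lam : Fin k → ℝ, Servable k n t R (fun _ => 1) lam ∧ s = ∑ i, lam i} ∧
      sSup {s : ℝ | ∃ lam : Fin k → ℝ, Servable k n t R (fun _ => 1) lam ∧ s = ∑ i, lam i} ≤
        (C.card : ℝ) :=
  matching_le_capacity_le_cover_general k n t R M hM C hC
end

section
/- In a finite bipartite graph, the maximum value of a fractional matching equals the matching number: m_f(G) = m(G). -/
open Finset

/-- A matching in a simple graph: a set of pairwise vertex-disjoint edges. -/
def GraphMatching {V : Type} [Fintype V] [DecidableEq V] (G : SimpleGraph V)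
    [DecidableRel G.Adj] (M : Finset (Sym2 V)) : Prop :=
  M ⊆ G.edgeFinset ∧ ∀ e ∈ M, ∀ e' ∈ M, e ≠ e' → ∀ v : V, v ∈ e → v ∉ e'

/-- A fractional matching: values in `[0,1]` on edges with total at most `1`
at every vertex. -/
def GraphFracMatching {V : Type} [Fintype V] [DecidableEq V] (G : SimpleGraph V)
    [DecidableRel G.Adj] (x : Sym2 V → ℝ) : Prop :=
  (∀ e, 0 ≤ x e ∧ x e ≤ 1) ∧ (∀ e ∉ G.edgeFinset, x e = 0) ∧
    ∀ v : V, (∑ e ∈ G.edgeFinset, if v ∈ e then x e else 0) ≤ 1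

/-- A vertex cover: a set of vertices meeting every edge. -/
def GraphVertexCover {V : Type} [Fintype V] [DecidableEq V] (G : SimpleGraph V)
    [DecidableRel G.Adj] (C : Finset V) : Prop :=
  ∀ e ∈ G.edgeFinset, ∃ v ∈ C, v ∈ e

/-! Weak duality: a fractional matching has total weight at most the size of any vertex cover,
since every edge meets the cover and every vertex carries weight at most `1`. König's theorem
closes the gap in a bipartite graph: with `A` a colour class and `S₀ ⊆ A` of maximal deficiency
`d = |S₀| - |N(S₀)|`, the set `(A \ S₀) ∪ N(S₀)` is a vertex cover of size at most `|A| - d`,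
while Hall's theorem with `d` extra vertices adjacent to all of `A` yields a matching of size
`|A| - d`. A matching is itself a fractional matching, so both suprema equal the size of this one.
-/

theorem Finset.exists_injective_disjSum_of_card_le_card_biUnion_add {ι α : Type*}
    [DecidableEq α] (t : ι → Finset α) (d : ℕ) (h : ∀ s : Finset ι, #s ≤ #(s.biUnion t) + d) :
    ∃ F : ι → α ⊕ Fin d, Function.Injective F ∧
      ∀ i, F i ∈ (t i).disjSum (univ : Finset (Fin d)) := by
  refine (all_card_le_biUnion_card_iff_exists_injective _).mp fun s => ?_
  obtain rfl | ⟨i₀, hi₀⟩ := s.eq_empty_or_nonempty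
  · simp
  have hsub :
      (s.biUnion t).disjSum (univ : Finset (Fin d)) ⊆ s.biUnion fun i => (t i).disjSum univ := by
    rintro (a | j) h
    · simpa using h
    · exact mem_biUnion.mpr ⟨i₀, hi₀, inr_mem_disjSum.mpr (mem_univ j)⟩
  calc #s ≤ #(s.biUnion t) + d := h s
    _ = #((s.biUnion t).disjSum (univ : Finset (Fin d))) := by simp
    _ ≤ #(s.biUnion fun i => (t i).disjSum univ) := card_le_card hsub

theorem Function.Injective.card_le_card_filter_isLeft_add {ι α : Type*} [Fintype ι] {d : ℕ}
    {F : ι → α ⊕ Fin d} (hF : Function.Injective F) :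
    Fintype.card ι ≤ #{i | (F i).isLeft} + d := by
  have hright : #{i | ¬(F i).isLeft} ≤ d := by
    calc #{i | ¬(F i).isLeft} ≤ #((∅ : Finset α).disjSum (univ : Finset (Fin d))) := by
          refine card_le_card_of_injOn F (fun i hi => ?_) hF.injOn
          obtain ⟨j, hj⟩ := Sum.isRight_iff.mp (Sum.not_isLeft.mp (mem_filter.mp hi).2)
          simp [hj]
      _ = d := by simp
  have := card_filter_add_card_filter_not (s := univ) fun i => (F i).isLeft
  rw [card_univ] at this
  omega

section

variable {V : Type} [Fintype V] [DecidableEq V] {G : SimpleGraph V} [DecidableRel G.Adj]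

namespace GraphFracMatching

theorem sum_le_card_of_graphVertexCover {x : Sym2 V → ℝ} (hx : GraphFracMatching G x)
    {C : Finset V} (hC : GraphVertexCover G C) : ∑ e ∈ G.edgeFinset, x e ≤ #C := by
  have hcount (e) (he : e ∈ G.edgeFinset) : (1 : ℝ) ≤ #{v ∈ C | v ∈ e} := by
    obtain ⟨v, hvC, hve⟩ := hC e he
    exact_mod_cast card_pos.mpr ⟨v, mem_filter.mpr ⟨hvC, hve⟩⟩
  calc ∑ e ∈ G.edgeFinset, x e
      ≤ ∑ e ∈ G.edgeFinset, (#{v ∈ C | v ∈ e} : ℝ) * x e :=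
        sum_le_sum fun e he => le_mul_of_one_le_left (hx.1 e).1 (hcount e he)
    _ = ∑ v ∈ C, ∑ e ∈ G.edgeFinset, if v ∈ e then x e else 0 := by
        rw [sum_comm]
        refine sum_congr rfl fun e _ => ?_
        rw [← sum_filter, sum_const, nsmul_eq_mul]
    _ ≤ ∑ _v ∈ C, (1 : ℝ) := sum_le_sum fun v _ => hx.2.2 v
    _ = #C := by rw [sum_const, nsmul_one]

end GraphFracMatching

namespace GraphMatching

variable {M : Finset (Sym2 V)}

theorem graphFracMatching_indicator (hM : GraphMatching G M) :
    GraphFracMatching G fun e => if e ∈ M then 1 else 0 := by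
  refine ⟨fun e => by dsimp only; split_ifs <;> norm_num, fun e he => if_neg fun h => he (hM.1 h),
    fun v => ?_⟩
  have hsingle : #{e ∈ G.edgeFinset | v ∈ e ∧ e ∈ M} ≤ 1 :=
    card_le_one.mpr fun e he e' he' => by
      simp only [mem_filter] at he he'
      by_contra hne
      exact hM.2 e he.2.2 e' he'.2.2 hne v he.2.1 he'.2.1
  simp only [← ite_and, sum_boole]
  exact_mod_cast hsingle

theorem sum_indicator (hM : GraphMatching G M) :
    ∑ e ∈ G.edgeFinset, (if e ∈ M then 1 else 0 : ℝ) = #M := by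
  rw [sum_boole, filter_mem_eq_inter, inter_eq_right.mpr hM.1]

end GraphMatching

theorem exists_injOn_adj_of_card_le_card_biUnion_add (A : Finset V) (d : ℕ)
    (hA : ∀ S ⊆ A, #S ≤ #(S.biUnion (G.neighborFinset ·)) + d) :
    ∃ B ⊆ A, #A ≤ #B + d ∧ ∃ f : V → V, Set.InjOn f B ∧ ∀ a ∈ B, G.Adj a (f a) := by
  obtain ⟨F, hFinj, hFT⟩ :=
    exists_injective_disjSum_of_card_le_card_biUnion_add (fun a : A => G.neighborFinset a) d
      fun s => by
        simpa [image_biUnion, card_image_of_injective _ Subtype.val_injective] using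
          hA (s.image Subtype.val) fun v hv => by obtain ⟨a, -, rfl⟩ := mem_image.mp hv; exact a.2
  let f (v : V) : V := if h : v ∈ A then (F ⟨v, h⟩).elim id fun _ => v else v
  have hF_inl (a : A) (ha : (F a).isLeft) : F a = .inl (f a) ∧ G.Adj a (f a) := by
    obtain ⟨b, hb⟩ := Sum.isLeft_iff.mp ha
    have hfa : f a = b := by simp [f, hb]
    have hab := hFT a
    rw [hb, inl_mem_disjSum, SimpleGraph.mem_neighborFinset] at hab
    exact ⟨hfa ▸ hb, hfa ▸ hab⟩
  refine ⟨({a | (F a).isLeft} : Finset A).map (Function.Embedding.subtype _), fun v hv => ?_, ?_,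
    f, ?_, ?_⟩
  · obtain ⟨a, -, rfl⟩ := mem_map.mp hv
    exact a.2
  · simpa using hFinj.card_le_card_filter_isLeft_add
  · intro v hv w hw hvw
    obtain ⟨a, ha, rfl⟩ := mem_map.mp hv
    obtain ⟨b, hb, rfl⟩ := mem_map.mp hw
    have hFab : F a = F b := by
      rw [(hF_inl a (mem_filter.mp ha).2).1, (hF_inl b (mem_filter.mp hb).2).1]
      exact congrArg _ hvw
    exact congrArg Subtype.val (hFinj hFab)
  · intro v hv
    obtain ⟨a, ha, rfl⟩ := mem_map.mp hv
    exact (hF_inl a (mem_filter.mp ha).2).2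

theorem exists_graphMatching_card_eq_of_injOn_adj {A : Finset V} (hA : G.IsIndepSet A)
    {f : V → V} (hf : Set.InjOn f A) (hadj : ∀ a ∈ A, G.Adj a (f a)) :
    ∃ M, GraphMatching G M ∧ #M = #A := by
  have hfA {a b : V} (ha : a ∈ A) (hb : b ∈ A) : f b ≠ a := fun hba =>
    hA hb ha (hba ▸ (hadj b hb).ne) (hba ▸ hadj b hb)
  refine ⟨A.image fun a => s(a, f a), ⟨fun e he => ?_, fun e he e' he' hne v hv hv' => ?_⟩,
    card_image_of_injOn fun a ha b hb hab => ?_⟩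
  · obtain ⟨a, ha, rfl⟩ := mem_image.mp he
    exact G.mem_edgeFinset.mpr (hadj a ha)
  · obtain ⟨a, ha, rfl⟩ := mem_image.mp he
    obtain ⟨b, hb, rfl⟩ := mem_image.mp he'
    have hab : a ≠ b := by rintro rfl; exact hne rfl
    rcases Sym2.mem_iff.mp hv with rfl | rfl <;> rcases Sym2.mem_iff.mp hv' with h | h
    · exact hab h
    · exact hfA ha hb h.symm
    · exact hfA hb ha h
    · exact hab (hf ha hb h)
  · rcases Sym2.eq_iff.mp hab with ⟨h, -⟩ | ⟨h, -⟩
    · exact h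
    · exact absurd h.symm (hfA ha hb)

theorem exists_graphMatching_graphVertexCover_card_le {A : Finset V} (hA : G.IsIndepSet A)
    (hAC : GraphVertexCover G A) :
    ∃ M C, GraphMatching G M ∧ GraphVertexCover G C ∧ #C ≤ #M := by
  let N (S : Finset V) := S.biUnion (G.neighborFinset ·)
  obtain ⟨S₀, hS₀, hmax⟩ := A.powerset.exists_max_image (fun S => (#S : ℤ) - #(N S))
    ⟨∅, empty_mem_powerset A⟩
  rw [mem_powerset] at hS₀
  have hdef_nonneg : (0 : ℤ) ≤ #S₀ - #(N S₀) := by simpa [N] using hmax ∅ (empty_mem_powerset A)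
  obtain ⟨B, hBA, hAB, f, hf, hadj⟩ := exists_injOn_adj_of_card_le_card_biUnion_add (G := G) A
    (#S₀ - #(N S₀)) fun S hS => by have := hmax S (mem_powerset.mpr hS); dsimp only [N] at *; omega
  obtain ⟨M, hM, hMB⟩ :=
    exists_graphMatching_card_eq_of_injOn_adj (Set.Pairwise.mono (coe_subset.mpr hBA) hA) hf hadj
  refine ⟨M, (A \ S₀) ∪ N S₀, hM, fun e he => ?_, ?_⟩
  · obtain ⟨a, haA, hae⟩ := hAC e he
    by_cases haS : a ∈ S₀
    · obtain ⟨b, rfl⟩ := Sym2.mem_iff_exists.mp hae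
      refine ⟨b, mem_union_right _ (mem_biUnion.mpr ⟨a, haS, ?_⟩), Sym2.mem_mk_right a b⟩
      exact (G.mem_neighborFinset a b).mpr (G.mem_edgeFinset.mp he)
    · exact ⟨a, mem_union_left _ (mem_sdiff.mpr ⟨haA, haS⟩), hae⟩
  · have := card_union_le (A \ S₀) (N S₀)
    have := card_sdiff_of_subset hS₀
    have := card_le_card hS₀
    omega

theorem exists_graphMatching_graphVertexCover_card_le_of_coloring (c : G.Coloring (Fin 2)) :
    ∃ M C, GraphMatching G M ∧ GraphVertexCover G C ∧ #C ≤ #M := by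
  refine exists_graphMatching_graphVertexCover_card_le (A := {v | c v = 0})
    (fun v hv w hw _ hadj => c.valid hadj ?_) fun e he => ?_
  · simp_all
  · induction e with
    | _ u v =>
      have huv : c u ≠ c v := c.valid (G.mem_edgeFinset.mp he)
      by_cases hu : c u = 0
      · exact ⟨u, mem_filter.mpr ⟨mem_univ u, hu⟩, Sym2.mem_mk_left u v⟩
      · exact ⟨v, mem_filter.mpr ⟨mem_univ v, by omega⟩, Sym2.mem_mk_right u v⟩

end

theorem bipartite_fracMatching_eq_matching {V : Type} [Fintype V] [DecidableEq V]
    (G : SimpleGraph V) [DecidableRel G.Adj] (hbip : G.Colorable 2) :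
    sSup {s : ℝ | ∃ x, GraphFracMatching G x ∧ s = ∑ e ∈ G.edgeFinset, x e} =
      sSup {s : ℝ | ∃ M : Finset (Sym2 V), GraphMatching G M ∧ s = (M.card : ℝ)} := by
  obtain ⟨c⟩ := hbip
  obtain ⟨M₀, C₀, hM₀, hC₀, hcard⟩ := exists_graphMatching_graphVertexCover_card_le_of_coloring c
  have hfrac : IsGreatest {s : ℝ | ∃ x, GraphFracMatching G x ∧ s = ∑ e ∈ G.edgeFinset, x e}
      #M₀ := by
    refine ⟨⟨_, hM₀.graphFracMatching_indicator, hM₀.sum_indicator.symm⟩, ?_⟩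
    rintro s ⟨x, hx, rfl⟩
    exact (hx.sum_le_card_of_graphVertexCover hC₀).trans (by exact_mod_cast hcard)
  have hint : IsGreatest {s : ℝ | ∃ M : Finset (Sym2 V), GraphMatching G M ∧ s = (M.card : ℝ)}
      #M₀ := by
    refine ⟨⟨M₀, hM₀, rfl⟩, ?_⟩
    rintro s ⟨M, hM, rfl⟩
    exact hfrac.2 ⟨_, hM.graphFracMatching_indicator, hM.sum_indicator.symm⟩
  rw [hfrac.csSup_eq, hint.csSup_eq]
end

section
/- The service capacity of the binary simplex code [2^k − 1, k]_2 with unit server rates equals 2^{k−1}: the maximum over servable demand vectors λ of Σ_{i=1}^k λ_i is exactly 2^{k−1}. -/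
open Finset

/-- A demand vector `lam` is servable by the `[2^k-1, k]_2` simplex code with
unit server rates: servers are the nonzero vectors of `𝔽_2^k`, and a recovery
set for file `i` is a set of one or two servers whose stored vectors sum to
`e_i`. -/
def SimplexServable (k : ℕ) (lam : Fin k → ℝ) : Prop :=
  ∃ w : Fin k → Finset {v : Fin k → ZMod 2 // v ≠ 0} → ℝ,
    (∀ i S, 0 ≤ w i S) ∧
    (∀ i S, w i S ≠ 0 →
      1 ≤ S.card ∧ S.card ≤ 2 ∧ ∑ v ∈ S, v.val = Pi.single i 1) ∧
    (∀ i, ∑ S : Finset {v : Fin k → ZMod 2 // v ≠ 0}, w i S = lam i) ∧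
    ∀ v : {v : Fin k → ZMod 2 // v ≠ 0},
      (∑ i, ∑ S ∈ Finset.univ.filter (fun S => v ∈ S), w i S) ≤ 1

/-! Every recovery set of file `i` sums to `e_i`, which has odd weight, so it contains a server of
odd weight. There are only `2^(k-1)` such servers, each of capacity 1, so the total demand is at
most `2^(k-1)`. Conversely, the nonzero vectors split into the `2^(k-1)` disjoint recovery sets
`{x, x + e_i}` with `x_i = 0` (the zero vector dropped, so `x = 0` gives `{e_i}`), and these serve
a demand of `2^(k-1)` on file `i` alone. -/

theorem AddMonoidHom.card_fiber_mul_two {G : Type*} [AddGroup G] [Fintype G]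
    (φ : G →+ ZMod 2) (hφ : Function.Surjective φ) (a : ZMod 2) :
    #{g | φ g = a} * 2 = Fintype.card G := by
  calc #{g | φ g = a} * 2 = ∑ b : ZMod 2, #{g | φ g = b} := by
        rw [sum_congr rfl fun b _ => AddMonoidHom.card_fiber_eq_of_mem_range φ (hφ b) (hφ a)]
        simp [ZMod.card, mul_comm]
    _ = Fintype.card G := (card_eq_sum_card_fiberwise fun _ _ => mem_univ _).symm

theorem AddMonoidHom.card_fiber_eq_two_pow {k : ℕ} (φ : (Fin k → ZMod 2) →+ ZMod 2)
    (i : Fin k) (hφ : φ (Pi.single i 1) = 1) (a : ZMod 2) : #{x | φ x = a} = 2 ^ (k - 1) := by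
  have hsurj : Function.Surjective φ := by
    intro b
    fin_cases b
    exacts [⟨0, map_zero φ⟩, ⟨_, hφ⟩]
  have := φ.card_fiber_mul_two hsurj a
  rw [Fintype.card_fun, ZMod.card, Fintype.card_fin, ← pow_sub_one_mul i.pos.ne'] at this
  omega

abbrev SimplexServer (k : ℕ) := {v : Fin k → ZMod 2 // v ≠ 0}

section

variable {k : ℕ}

def IsRecoverySet (i : Fin k) (S : Finset (SimplexServer k)) : Prop :=
  1 ≤ S.card ∧ S.card ≤ 2 ∧ ∑ v ∈ S, v.val = Pi.single i 1

theorem IsRecoverySet.exists_apply_ne_zero {i : Fin k} {S : Finset (SimplexServer k)}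
    (hS : IsRecoverySet i S) {M : Type*} [AddCommMonoid M] (φ : (Fin k → ZMod 2) →+ M)
    (hφ : φ (Pi.single i 1) ≠ 0) : ∃ v ∈ S, φ v ≠ 0 := by
  apply exists_ne_zero_of_sum_ne_zero
  rwa [← map_sum, hS.2.2]

theorem SimplexServable.sum_le_card_of_hitting {lam : Fin k → ℝ} (h : SimplexServable k lam)
    (T : Finset (SimplexServer k)) (hT : ∀ i S, IsRecoverySet i S → ∃ v ∈ S, v ∈ T) :
    ∑ i, lam i ≤ T.card := by
  obtain ⟨w, hw_nonneg, hw_rec, hw_lam, hw_load⟩ := h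
  have hw_le : ∀ i S, w i S ≤ ∑ v ∈ T, if v ∈ S then w i S else 0 := by
    intro i S
    by_cases hw : w i S = 0
    · rw [hw]
      exact sum_nonneg fun _ _ => by split_ifs <;> rfl
    · obtain ⟨v, hvS, hvT⟩ := hT i S (hw_rec i S hw)
      simpa [hvS] using single_le_sum (f := fun v => if v ∈ S then w i S else 0)
        (fun _ _ => by split_ifs <;> simp [hw_nonneg]) hvT
  calc ∑ i, lam i = ∑ i, ∑ S, w i S := by simp only [hw_lam]
    _ ≤ ∑ i, ∑ S, ∑ v ∈ T, if v ∈ S then w i S else 0 := by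
      gcongr with i _ S
      exact hw_le i S
    _ = ∑ v ∈ T, ∑ i, ∑ S : Finset (SimplexServer k) with v ∈ S, w i S := by
      simp only [sum_filter]
      exact (sum_congr rfl fun i _ => sum_comm).trans sum_comm
    _ ≤ ∑ v ∈ T, 1 := sum_le_sum fun v _ => hw_load v
    _ = T.card := by simp

theorem SimplexServable.sum_le_two_pow {lam : Fin k → ℝ} (h : SimplexServable k lam)
    (hk : 1 ≤ k) : ∑ i, lam i ≤ 2 ^ (k - 1) := by
  set parity : (Fin k → ZMod 2) →+ ZMod 2 := ∑ j, Pi.evalAddMonoidHom (fun _ => ZMod 2) j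
  have hparity : ∀ i, parity (Pi.single i 1) = 1 := by simp [parity]
  have hhit : ∀ i S, IsRecoverySet i S →
      ∃ v ∈ S, v ∈ (univ.filter (parity · = 1)).subtype (· ≠ 0) := by
    intro i S hS
    obtain ⟨v, hvS, hv⟩ := hS.exists_apply_ne_zero parity (by simp [hparity])
    refine ⟨v, hvS, mem_subtype.mpr (mem_filter.mpr ⟨mem_univ _, ?_⟩)⟩
    -- `ZMod 2` is definitionally `Fin 2`
    exact Fin.eq_one_of_ne_zero _ hv
  calc ∑ i, lam i ≤ #((univ.filter (parity · = 1)).subtype (· ≠ 0)) :=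
        h.sum_le_card_of_hitting _ hhit
    _ ≤ #{x | parity x = 1} := by rw [card_subtype]; exact_mod_cast card_filter_le _ _
    _ = 2 ^ (k - 1) := by rw [parity.card_fiber_eq_two_pow ⟨0, hk⟩ (hparity _)]; norm_cast

theorem simplexServable_single_card_of_pairwiseDisjoint (i : Fin k)
    (F : Finset (Finset (SimplexServer k))) (hF : ∀ S ∈ F, IsRecoverySet i S)
    (hdisj : (F : Set (Finset (SimplexServer k))).PairwiseDisjoint id) :
    SimplexServable k (Pi.single i (F.card : ℝ)) := by
  refine ⟨fun j S => if j = i ∧ S ∈ F then 1 else 0, fun j S => ite_nonneg zero_le_one le_rfl,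
    ?_, ?_, ?_⟩
  · intro j S hw
    obtain ⟨rfl, hS⟩ : j = i ∧ S ∈ F := by
      by_contra hc
      exact hw (if_neg hc)
    exact hF S hS
  · intro j
    by_cases hj : j = i
    · subst hj
      simp
    · simp [hj]
  · intro v
    have hle : #{S ∈ F | v ∈ S} ≤ 1 :=
      card_le_one.mpr fun S hS S' hS' =>
        hdisj.elim_finset (mem_filter.mp hS).1 (mem_filter.mp hS').1 v
          (mem_filter.mp hS).2 (mem_filter.mp hS').2
    simpa [ite_and, filter_inter, univ_inter] using hle

def simplexPair (i : Fin k) (x : Fin k → ZMod 2) : Finset (SimplexServer k) :=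
  ({x, x + Pi.single i 1} : Finset (Fin k → ZMod 2)).subtype (· ≠ 0)

theorem isRecoverySet_simplexPair (i : Fin k) (x : Fin k → ZMod 2) :
    IsRecoverySet i (simplexPair i x) := by
  have hsingle : (Pi.single i 1 : Fin k → ZMod 2) ≠ 0 := by simp
  have hsum : ∑ v ∈ simplexPair i x, v.val = Pi.single i 1 := by
    rw [simplexPair, sum_subtype_eq_sum_filter (fun v => v), sum_filter_ne_zero,
      sum_pair (by simp [hsingle]), ← add_assoc, ZModModule.add_self, zero_add]
  refine ⟨card_pos.mpr (nonempty_of_sum_ne_zero (hsum ▸ hsingle)), ?_, hsum⟩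
  rw [simplexPair, card_subtype]
  exact (card_filter_le _ _).trans card_le_two

theorem update_eq_of_mem_simplexPair {i : Fin k} {x : Fin k → ZMod 2} (hx : x i = 0)
    {v : SimplexServer k} (hv : v ∈ simplexPair i x) : Function.update v.val i 0 = x := by
  rw [simplexPair, mem_subtype, mem_insert, mem_singleton] at hv
  ext j
  rcases eq_or_ne j i with rfl | hj
  · simp [hx]
  · rcases hv with hv | hv <;> simp [hv, hj]

theorem simplexServable_single_two_pow (i : Fin k) :
    SimplexServable k (Pi.single i (2 ^ (k - 1))) := by
  set H : Finset (Fin k → ZMod 2) := {x | x i = 0}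
  have hH : #H = 2 ^ (k - 1) :=
    (Pi.evalAddMonoidHom (fun _ => ZMod 2) i).card_fiber_eq_two_pow i (by simp) 0
  have hproj : ∀ x ∈ H, ∀ v ∈ simplexPair i x, Function.update v.val i 0 = x :=
    fun x hx _ => update_eq_of_mem_simplexPair (mem_filter.mp hx).2
  have hinj : Set.InjOn (simplexPair i) H := by
    intro x hx y hy hxy
    obtain ⟨v, hv⟩ := card_pos.mp (isRecoverySet_simplexPair i x).1
    rw [← hproj x hx v hv, hproj y hy v (hxy ▸ hv)]
  have hdisj : (H.image (simplexPair i) : Set (Finset (SimplexServer k))).PairwiseDisjoint id := by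
    rw [coe_image, hinj.pairwiseDisjoint_image]
    intro x hx y hy hne
    exact disjoint_left.mpr fun v hv hv' => hne ((hproj x hx v hv).symm.trans (hproj y hy v hv'))
  simpa [card_image_of_injOn hinj, hH] using
    simplexServable_single_card_of_pairwiseDisjoint i (H.image (simplexPair i))
      (by simpa using fun x _ => isRecoverySet_simplexPair i x) hdisj

end

theorem simplex_service_capacity (k : ℕ) (hk : 1 ≤ k) :
    IsGreatest {s : ℝ | ∃ lam : Fin k → ℝ, SimplexServable k lam ∧ s = ∑ i, lam i}
      (2 ^ (k - 1)) := by
  refine ⟨⟨_, simplexServable_single_two_pow ⟨0, hk⟩, by simp⟩, ?_⟩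
  rintro _ ⟨lam, hlam, rfl⟩
  exact hlam.sum_le_two_pow hk
end
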